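/- arXiv:1806.07857 — 4 statements merged into one kernel-verified Lean document; each statement's English description precedes it below -/
import Mathlib

section
/- For a finite-horizon MDP with all reward given at the final time step, suppose a second-order Markov reward redistribution produces a return-equivalent SDP. Then for a fixed policy π, the redistribution is optimal (i.e., the expected sum of future redistributed rewards κ(T−t−1, t) = 0 for all 0 ≤ t ≤ T−1) if and only if the expected redistributed reward satisfies E[R_{t+1} | s_{t−1}, a_{t−1}, s_t, a_t] = q~^π(s_t, a_t) − q~^π(s_{t−1}, a_{t−1}) for all t, where q~^π is the action-value function of the original delayed-reward MDP. -/
open Finset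

/-- Conditional expectation of `f` given the event `E` under the (finitely supported)
probability weights `μ`. -/
noncomputable def cexp {Ω : Type*} [Fintype Ω] (μ f : Ω → ℝ) (E : Ω → Prop)
    [DecidablePred E] : ℝ :=
  (∑ ω ∈ Finset.univ.filter E, μ ω * f ω) / (∑ ω ∈ Finset.univ.filter E, μ ω)

/-- The predecessor time index, with `pd 0 = 0` serving as the formal pair
`(s₋₁, a₋₁)`. -/
def pd {T : ℕ} (t : Fin (T + 1)) : Fin (T + 1) :=
  ⟨t.1 - 1, lt_of_le_of_lt (Nat.sub_le _ _) t.isLt⟩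

/-!
Return equivalence splits the delayed return along every trajectory into the redistributed
reward before time `t`, at time `t`, and after time `t` (the last being `κ(T-t-1, t)`).
Condition on `(s_{t-1}, a_{t-1}) = y` and `(s_t, a_t) = x`. The Markov property makes the
future part and the return itself forget `y`, so their conditional expectations are
`E[κ | s_t, a_t] = 0` and `q̃^π(x)`; it makes the past part forget `x`, and by return
equivalence at time `t - 1` that part has expectation `q̃^π(y) - E[κ | s_{t-1}, a_{t-1}] = q̃^π(y)`.
Conversely, if the redistributed rewards are differences of `q̃^π`, then `κ` telescopes to
`R̃_{T+1} - q̃^π(s_t, a_t)`, whose conditional expectation given `(s_t, a_t)` vanishes.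

The Markov property enters only through one observation: exchanging the pasts of two
trajectories that meet at time `t` preserves the product of their weights.
-/

section ConditionalExpectation

variable {Ω : Type*} [Fintype Ω] {μ : Ω → ℝ}

lemma sum_filter_ne_zero_iff (hμ : ∀ ω, 0 ≤ μ ω) (E : Ω → Prop) [DecidablePred E] :
    (∑ ω ∈ univ.filter E, μ ω) ≠ 0 ↔ ∃ ω, E ω ∧ μ ω ≠ 0 := by
  rw [Ne, sum_eq_zero_iff_of_nonneg fun ω _ => hμ ω]
  simp

lemma cexp_congr {f g : Ω → ℝ} {E : Ω → Prop} [DecidablePred E]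
    (h : ∀ ω, E ω → μ ω ≠ 0 → f ω = g ω) : cexp μ f E = cexp μ g E := by
  unfold cexp
  congr 1
  refine sum_congr rfl fun ω hω => ?_
  rcases eq_or_ne (μ ω) 0 with h0 | h0
  · simp [h0]
  · rw [h ω (mem_filter.mp hω).2 h0]

lemma cexp_add (f g : Ω → ℝ) (E : Ω → Prop) [DecidablePred E] :
    cexp μ (fun ω => f ω + g ω) E = cexp μ f E + cexp μ g E := by
  simp only [cexp, mul_add, sum_add_distrib, add_div]

lemma cexp_const (c : ℝ) {E : Ω → Prop} [DecidablePred E]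
    (hE : (∑ ω ∈ univ.filter E, μ ω) ≠ 0) : cexp μ (fun _ => c) E = c := by
  rw [cexp, ← sum_mul, mul_div_cancel_left₀ _ hE]

lemma cexp_eq_of_forall {f : Ω → ℝ} {c : ℝ} {E : Ω → Prop} [DecidablePred E]
    (hE : (∑ ω ∈ univ.filter E, μ ω) ≠ 0) (h : ∀ ω, E ω → μ ω ≠ 0 → f ω = c) :
    cexp μ f E = c :=
  (cexp_congr h).trans (cexp_const c hE)

lemma cexp_and_eq_of_sum_mul_sum (hμ : ∀ ω, 0 ≤ μ ω) (f : Ω → ℝ) (F E : Ω → Prop)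
    [DecidablePred F] [DecidablePred E]
    (hFE : (∑ ω ∈ univ.filter (fun ω => F ω ∧ E ω), μ ω) ≠ 0)
    (hfE : (∑ ω ∈ univ.filter F, μ ω * f ω * (if E ω then 1 else 0)) * ∑ ω ∈ univ.filter F, μ ω
      = (∑ ω ∈ univ.filter F, μ ω * f ω) * ∑ ω ∈ univ.filter F, μ ω * (if E ω then 1 else 0)) :
    cexp μ f (fun ω => F ω ∧ E ω) = cexp μ f F := by
  have hF : (∑ ω ∈ univ.filter F, μ ω) ≠ 0 := by
    obtain ⟨ω, hω, hμω⟩ := (sum_filter_ne_zero_iff hμ _).1 hFE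
    exact (sum_filter_ne_zero_iff hμ F).2 ⟨ω, hω.1, hμω⟩
  simp only [mul_ite, mul_one, mul_zero, ← sum_filter, filter_filter] at hfE
  rw [cexp, cexp, div_eq_div_iff hFE hF, hfE]

end ConditionalExpectation

section Trajectory

variable {X : Type*} {T : ℕ}

def splice (t : Fin (T + 1)) (ω ω' : Fin (T + 1) → X) : Fin (T + 1) → X :=
  fun τ => if τ ≤ t then ω τ else ω' τ

lemma splice_of_le {t τ : Fin (T + 1)} (ω ω' : Fin (T + 1) → X) (h : τ ≤ t) :
    splice t ω ω' τ = ω τ :=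
  if_pos h

lemma splice_of_ge {t τ : Fin (T + 1)} {ω ω' : Fin (T + 1) → X} (hω : ω t = ω' t)
    (h : t ≤ τ) : splice t ω ω' τ = ω' τ := by
  rcases h.lt_or_eq with h | rfl
  · exact if_neg (not_le.mpr h)
  · exact (if_pos le_rfl).trans hω

lemma splice_splice (t : Fin (T + 1)) (ω ω' : Fin (T + 1) → X) :
    splice t (splice t ω ω') (splice t ω' ω) = ω := by
  funext τ
  by_cases h : τ ≤ t <;> simp [splice, h]

def HasMarkovFactorization (μ : (Fin (T + 1) → X) → ℝ) : Prop :=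
  ∃ (p₀ : X → ℝ) (p : Fin T → X → X → ℝ),
    ∀ ω, μ ω = p₀ (ω 0) * ∏ s : Fin T, p s (ω s.castSucc) (ω s.succ)

lemma HasMarkovFactorization.mul_splice {μ : (Fin (T + 1) → X) → ℝ}
    (hμ : HasMarkovFactorization μ) {t : Fin (T + 1)} {ω ω' : Fin (T + 1) → X}
    (hω : ω t = ω' t) : μ (splice t ω ω') * μ (splice t ω' ω) = μ ω * μ ω' := by
  obtain ⟨p₀, p, hμ⟩ := hμ
  have transition (s : Fin T) :
      p s (splice t ω ω' s.castSucc) (splice t ω ω' s.succ) *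
        p s (splice t ω' ω s.castSucc) (splice t ω' ω s.succ) =
      p s (ω s.castSucc) (ω s.succ) * p s (ω' s.castSucc) (ω' s.succ) := by
    rcases le_or_gt s.succ t with h | h
    · have h' := s.castSucc_lt_succ.le.trans h
      rw [splice_of_le _ _ h, splice_of_le _ _ h, splice_of_le _ _ h', splice_of_le _ _ h']
    · have h' : t ≤ s.castSucc := Fin.le_castSucc_iff.mpr h
      have h'' := h'.trans s.castSucc_lt_succ.le
      rw [splice_of_ge hω h', splice_of_ge hω h'', splice_of_ge hω.symm h',
        splice_of_ge hω.symm h'', mul_comm]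
  rw [hμ, hμ, hμ, hμ, splice_of_le _ _ (Fin.zero_le t), splice_of_le _ _ (Fin.zero_le t),
    mul_mul_mul_comm, ← prod_mul_distrib, prod_congr rfl fun s _ => transition s,
    prod_mul_distrib, mul_mul_mul_comm]

variable [Fintype X] [DecidableEq X] {μ : (Fin (T + 1) → X) → ℝ}

theorem HasMarkovFactorization.sum_mul_mul_sum (hμ : HasMarkovFactorization μ)
    (t : Fin (T + 1)) (x : X) {f g : (Fin (T + 1) → X) → ℝ}
    (hf : DependsOn f (Set.Ici t)) (hg : DependsOn g (Set.Iic t)) :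
    (∑ ω ∈ univ.filter (fun ω => ω t = x), μ ω * f ω * g ω) *
        ∑ ω ∈ univ.filter (fun ω => ω t = x), μ ω =
      (∑ ω ∈ univ.filter (fun ω => ω t = x), μ ω * f ω) *
        ∑ ω ∈ univ.filter (fun ω => ω t = x), μ ω * g ω := by
  rw [sum_mul_sum, sum_mul_sum, ← sum_product', ← sum_product']
  have swap_mem : ∀ q ∈ univ.filter (fun ω => ω t = x) ×ˢ univ.filter (fun ω => ω t = x),
      (splice t q.2 q.1, splice t q.1 q.2) ∈
        univ.filter (fun ω => ω t = x) ×ˢ univ.filter (fun ω => ω t = x) := by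
    intro q hq
    simp only [mem_product, mem_filter, mem_univ, true_and] at hq ⊢
    rw [splice_of_le _ _ le_rfl, splice_of_le _ _ le_rfl]
    exact hq.symm
  refine sum_nbij' (fun q => (splice t q.2 q.1, splice t q.1 q.2))
    (fun q => (splice t q.2 q.1, splice t q.1 q.2)) swap_mem swap_mem
    (fun q _ => by simp only [splice_splice]) (fun q _ => by simp only [splice_splice])
    fun q hq => ?_
  simp only [mem_product, mem_filter, mem_univ, true_and] at hq
  have hq' : q.2 t = q.1 t := hq.2.trans hq.1.symm
  have hfq : f (splice t q.2 q.1) = f q.1 := hf fun τ hτ => splice_of_ge hq' hτ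
  have hgq : g (splice t q.1 q.2) = g q.1 := hg fun τ hτ => splice_of_le _ _ hτ
  rw [hfq, hgq]
  linear_combination -(f q.1 * g q.1) * hμ.mul_splice hq'

theorem HasMarkovFactorization.cexp_and_eq_of_past (hμ : HasMarkovFactorization μ)
    (hμ0 : ∀ ω, 0 ≤ μ ω) {t : Fin (T + 1)} {x : X} {f : (Fin (T + 1) → X) → ℝ}
    {E : (Fin (T + 1) → X) → Prop} [DecidablePred E]
    (hf : DependsOn f (Set.Iic t)) (hE : DependsOn E (Set.Ici t))
    (hxE : (∑ ω ∈ univ.filter (fun ω => ω t = x ∧ E ω), μ ω) ≠ 0) :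
    cexp μ f (fun ω => ω t = x ∧ E ω) = cexp μ f (fun ω => ω t = x) := by
  refine cexp_and_eq_of_sum_mul_sum hμ0 f _ E hxE ?_
  have h1E : DependsOn (fun ω => if E ω then (1 : ℝ) else 0) (Set.Ici t) :=
    fun ω ω' h => if_congr (iff_of_eq (hE h)) rfl rfl
  simp only [mul_right_comm _ (f _)]
  linear_combination hμ.sum_mul_mul_sum t x h1E hf

theorem HasMarkovFactorization.cexp_and_eq_of_future (hμ : HasMarkovFactorization μ)
    (hμ0 : ∀ ω, 0 ≤ μ ω) {t : Fin (T + 1)} {x : X} {f : (Fin (T + 1) → X) → ℝ}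
    {E : (Fin (T + 1) → X) → Prop} [DecidablePred E]
    (hf : DependsOn f (Set.Ici t)) (hE : DependsOn E (Set.Iic t))
    (hEx : (∑ ω ∈ univ.filter (fun ω => E ω ∧ ω t = x), μ ω) ≠ 0) :
    cexp μ f (fun ω => E ω ∧ ω t = x) = cexp μ f (fun ω => ω t = x) := by
  simp only [cexp, and_comm (a := E _)] at hEx ⊢
  refine cexp_and_eq_of_sum_mul_sum hμ0 f _ E hEx ?_
  exact hμ.sum_mul_mul_sum t x hf fun ω ω' h => if_congr (iff_of_eq (hE h)) rfl rfl

end Trajectory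

section Reward

variable {X : Type*} {T : ℕ}

lemma sum_filter_lt_sub_pd {M : Type*} [AddCommGroup M] (v : Fin (T + 1) → M)
    (t : Fin (T + 1)) :
    ∑ τ ∈ univ.filter (fun τ : Fin (T + 1) => (t : ℕ) < τ), (v τ - v (pd τ)) =
      v (Fin.last T) - v t := by
  induction t using Fin.reverseInduction with
  | last => simp [not_lt.mpr (Fin.is_le _)]
  | cast i ih =>
    have hfilter : univ.filter (fun τ : Fin (T + 1) => (i.castSucc : ℕ) < τ) =
        insert i.succ (univ.filter (fun τ : Fin (T + 1) => (i.succ : ℕ) < τ)) := by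
      ext τ
      simp only [mem_filter, mem_univ, true_and, mem_insert, Fin.ext_iff, Fin.val_succ,
        Fin.val_castSucc]
      omega
    have hpd : pd i.succ = i.castSucc := Fin.ext (by simp [pd])
    rw [hfilter, sum_insert (by simp), ih, hpd]
    abel

variable (h : Fin (T + 1) → X → X → ℝ)

/-- `κ(T - t - 1, t)` along the trajectory `ω`: the redistributed reward after time `t`. -/
def futureReward (t : Fin (T + 1)) (ω : Fin (T + 1) → X) : ℝ :=
  ∑ τ ∈ univ.filter (fun τ : Fin (T + 1) => (t : ℕ) < τ), h τ (ω (pd τ)) (ω τ)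

def pastReward (t : Fin (T + 1)) (ω : Fin (T + 1) → X) : ℝ :=
  ∑ τ ∈ univ.filter (fun τ : Fin (T + 1) => (τ : ℕ) < t), h τ (ω (pd τ)) (ω τ)

lemma sum_eq_pastReward_add_add_futureReward (t : Fin (T + 1)) (ω : Fin (T + 1) → X) :
    ∑ τ, h τ (ω (pd τ)) (ω τ) =
      pastReward h t ω + h t (ω (pd t)) (ω t) + futureReward h t ω := by
  have hfilter : univ.filter (fun τ : Fin (T + 1) => ¬ (τ : ℕ) < t) =
      insert t (univ.filter (fun τ : Fin (T + 1) => (t : ℕ) < τ)) := by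
    ext τ
    simp only [mem_filter, mem_univ, true_and, mem_insert, Fin.ext_iff]
    omega
  rw [← sum_filter_add_sum_filter_not univ (fun τ : Fin (T + 1) => (τ : ℕ) < t), hfilter,
    sum_insert (by simp), ← add_assoc]
  rfl

lemma sum_eq_pastReward_add_futureReward_pd {t : Fin (T + 1)} (ht : (t : ℕ) ≠ 0)
    (ω : Fin (T + 1) → X) :
    ∑ τ, h τ (ω (pd τ)) (ω τ) = pastReward h t ω + futureReward h (pd t) ω := by
  have hfilter : univ.filter (fun τ : Fin (T + 1) => ¬ (τ : ℕ) < t) =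
      univ.filter (fun τ : Fin (T + 1) => ((pd t : Fin (T + 1)) : ℕ) < τ) :=
    filter_congr fun τ _ => by simp only [pd]; omega
  rw [← sum_filter_add_sum_filter_not univ (fun τ : Fin (T + 1) => (τ : ℕ) < t), hfilter]
  rfl

lemma pastReward_zero : pastReward h 0 = 0 := by
  funext ω
  simp [pastReward]

lemma futureReward_last : futureReward h (Fin.last T) = 0 := by
  funext ω
  simp [futureReward, not_lt.mpr (Fin.is_le _)]

lemma dependsOn_pastReward (t : Fin (T + 1)) : DependsOn (pastReward h t) (Set.Iic (pd t)) := by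
  intro ω ω' hωω'
  refine sum_congr rfl fun τ hτ => ?_
  replace hτ : (τ : ℕ) < t := (mem_filter.mp hτ).2
  rw [hωω' (pd τ) (by simp only [Set.mem_Iic, Fin.le_def, pd]; omega),
    hωω' τ (by simp only [Set.mem_Iic, Fin.le_def, pd]; omega)]

lemma dependsOn_futureReward (t : Fin (T + 1)) : DependsOn (futureReward h t) (Set.Ici t) := by
  intro ω ω' hωω'
  refine sum_congr rfl fun τ hτ => ?_
  replace hτ : (t : ℕ) < τ := (mem_filter.mp hτ).2
  rw [hωω' (pd τ) (by simp only [Set.mem_Ici, Fin.le_def, pd]; omega),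
    hωω' τ (by simp only [Set.mem_Ici, Fin.le_def]; omega)]

lemma futureReward_eq_sub {t : Fin (T + 1)} {ω : Fin (T + 1) → X} (v : Fin (T + 1) → ℝ)
    (hv : ∀ τ : Fin (T + 1), (t : ℕ) < τ → h τ (ω (pd τ)) (ω τ) = v τ - v (pd τ)) :
    futureReward h t ω = v (Fin.last T) - v t :=
  (sum_congr rfl fun τ hτ => hv τ (mem_filter.mp hτ).2).trans (sum_filter_lt_sub_pd v t)

end Reward

section Redistribution

variable {X : Type*} [Fintype X] [DecidableEq X] {T : ℕ} {μ : (Fin (T + 1) → X) → ℝ}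
  {rT : X → ℝ} {h : Fin (T + 1) → X → X → ℝ}

/-- `q̃^π(s_t, a_t)` at `(s_t, a_t) = x`. -/
noncomputable def qValue (μ : (Fin (T + 1) → X) → ℝ) (rT : X → ℝ) (t : Fin (T + 1)) (x : X) :
    ℝ :=
  cexp μ (fun ω => rT (ω (Fin.last T))) (fun ω => ω t = x)

lemma qValue_last (hμ0 : ∀ ω, 0 ≤ μ ω) {ω : Fin (T + 1) → X} (hω : μ ω ≠ 0) :
    qValue μ rT (Fin.last T) (ω (Fin.last T)) = rT (ω (Fin.last T)) :=
  cexp_eq_of_forall ((sum_filter_ne_zero_iff hμ0 _).2 ⟨ω, rfl, hω⟩) fun _ hω' _ => by rw [hω']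

lemma cexp_pastReward_eq
    (hret : ∀ ω, μ ω ≠ 0 → ∑ t, h t (ω (pd t)) (ω t) = rT (ω (Fin.last T)))
    (hκ : ∀ t x, (∑ ω ∈ univ.filter (fun ω => ω t = x), μ ω) ≠ 0 →
      cexp μ (futureReward h t) (fun ω => ω t = x) = 0)
    {t : Fin (T + 1)} {y : X} (hy : (∑ ω ∈ univ.filter (fun ω => ω (pd t) = y), μ ω) ≠ 0) :
    cexp μ (pastReward h t) (fun ω => ω (pd t) = y) =
      if (t : ℕ) = 0 then 0 else qValue μ rT (pd t) y := by
  split_ifs with ht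
  · obtain rfl : t = 0 := Fin.ext ht
    rw [pastReward_zero]
    exact cexp_const 0 hy
  · rw [qValue, cexp_congr fun ω _ hω => (hret ω hω).symm.trans
      (sum_eq_pastReward_add_futureReward_pd h ht ω), cexp_add, hκ _ y hy, add_zero]

theorem HasMarkovFactorization.eq_qValue_sub_of_cexp_futureReward_eq_zero
    (hμ : HasMarkovFactorization μ) (hμ0 : ∀ ω, 0 ≤ μ ω)
    (hret : ∀ ω, μ ω ≠ 0 → ∑ t, h t (ω (pd t)) (ω t) = rT (ω (Fin.last T)))
    (hκ : ∀ t x, (∑ ω ∈ univ.filter (fun ω => ω t = x), μ ω) ≠ 0 →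
      cexp μ (futureReward h t) (fun ω => ω t = x) = 0)
    {t : Fin (T + 1)} {y x : X}
    (hyx : (∑ ω ∈ univ.filter (fun ω => ω (pd t) = y ∧ ω t = x), μ ω) ≠ 0) :
    h t y x = qValue μ rT t x - if (t : ℕ) = 0 then 0 else qValue μ rT (pd t) y := by
  obtain ⟨ω₀, ⟨hy₀, hx₀⟩, hμω₀⟩ := (sum_filter_ne_zero_iff hμ0 _).1 hyx
  have hpd : pd t ≤ t := Fin.le_def.mpr (Nat.sub_le _ _)
  have hsplit : cexp μ (fun ω => rT (ω (Fin.last T))) (fun ω => ω (pd t) = y ∧ ω t = x) =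
      cexp μ (pastReward h t) (fun ω => ω (pd t) = y ∧ ω t = x) + h t y x +
        cexp μ (futureReward h t) (fun ω => ω (pd t) = y ∧ ω t = x) := by
    rw [cexp_congr (g := fun ω => pastReward h t ω + h t y x + futureReward h t ω)
      fun ω ⟨hyω, hxω⟩ hω => by
        rw [← hret ω hω, sum_eq_pastReward_add_add_futureReward h t ω, hyω, hxω],
      cexp_add, cexp_add, cexp_const _ hyx]
  -- by the Markov property, the return and the future reward forget `y`, the past reward `x`
  have hreturn : cexp μ (fun ω => rT (ω (Fin.last T))) (fun ω => ω (pd t) = y ∧ ω t = x) =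
      qValue μ rT t x :=
    hμ.cexp_and_eq_of_future hμ0 (fun ω ω' hωω' => congrArg rT (hωω' _ (Fin.le_last t)))
      (fun ω ω' hωω' => by rw [hωω' (pd t) hpd]) hyx
  have hpast : cexp μ (pastReward h t) (fun ω => ω (pd t) = y ∧ ω t = x) =
      if (t : ℕ) = 0 then 0 else qValue μ rT (pd t) y := by
    rw [hμ.cexp_and_eq_of_past hμ0 (dependsOn_pastReward h t)
        (fun ω ω' hωω' => by rw [hωω' t hpd]) hyx,
      cexp_pastReward_eq hret hκ ((sum_filter_ne_zero_iff hμ0 _).2 ⟨ω₀, hy₀, hμω₀⟩)]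
  have hfuture : cexp μ (futureReward h t) (fun ω => ω (pd t) = y ∧ ω t = x) = 0 := by
    rw [hμ.cexp_and_eq_of_future hμ0 (dependsOn_futureReward h t)
        (fun ω ω' hωω' => by rw [hωω' (pd t) hpd]) hyx,
      hκ t x ((sum_filter_ne_zero_iff hμ0 _).2 ⟨ω₀, hx₀, hμω₀⟩)]
  rw [← hreturn, ← hpast, hsplit, hfuture]
  ring

lemma cexp_futureReward_eq_zero_of_eq_qValue_sub (hμ0 : ∀ ω, 0 ≤ μ ω)
    (hdiff : ∀ t y x, (∑ ω ∈ univ.filter (fun ω => ω (pd t) = y ∧ ω t = x), μ ω) ≠ 0 →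
      h t y x = qValue μ rT t x - if (t : ℕ) = 0 then 0 else qValue μ rT (pd t) y)
    {t : Fin (T + 1)} {x : X} (hx : (∑ ω ∈ univ.filter (fun ω => ω t = x), μ ω) ≠ 0) :
    cexp μ (futureReward h t) (fun ω => ω t = x) = 0 := by
  -- along each trajectory the future reward telescopes to `rT - q̃(t, x)`
  have htelescope (ω) (hxω : ω t = x) (hω : μ ω ≠ 0) :
      futureReward h t ω = rT (ω (Fin.last T)) + -qValue μ rT t x := by
    rw [futureReward_eq_sub h (fun τ => qValue μ rT τ (ω τ)) fun τ hτ => ?_,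
      qValue_last hμ0 hω, hxω, sub_eq_add_neg]
    rw [hdiff τ _ _ ((sum_filter_ne_zero_iff hμ0 _).2 ⟨ω, ⟨rfl, rfl⟩, hω⟩), if_neg (by omega)]
  rw [cexp_congr htelescope, cexp_add, cexp_const _ hx, qValue, add_neg_cancel]

end Redistribution

theorem optimal_reward_redistribution_iff_qvalue_differences_general
    {S A : Type*} [Fintype S] [Fintype A] [DecidableEq S] [DecidableEq A]
    (T : ℕ)
    -- Markov trajectory distribution of state-action pairs under the fixed policy π
    (μ : (Fin (T + 1) → S × A) → ℝ)
    (p0 : S × A → ℝ) (p : Fin T → S × A → S × A → ℝ)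
    (hμ : ∀ ω, μ ω = p0 (ω 0) * ∏ t : Fin T, p t (ω t.castSucc) (ω t.succ))
    (hμ0 : ∀ ω, 0 ≤ μ ω)
    -- expected delayed reward at sequence end, given the last state-action pair
    (rT : S × A → ℝ)
    -- second-order Markov redistributed reward:
    -- `h t y x = E[R_{t+1} | (s_{t-1},a_{t-1}) = y, (s_t,a_t) = x]`
    (h : Fin (T + 1) → S × A → S × A → ℝ)
    -- return-equivalence of the redistribution: along every possible trajectory the
    -- expected redistributed rewards sum to the expected delayed return
    (hret : ∀ ω : Fin (T + 1) → S × A, μ ω ≠ 0 →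
      (∑ t : Fin (T + 1), h t (ω (pd t)) (ω t)) = rT (ω (Fin.last T)))
    -- q̃^π : action-value function of the delayed-reward MDP
    (q : Fin (T + 1) → S × A → ℝ)
    (hq : ∀ t x, q t x = cexp μ (fun ω => rT (ω (Fin.last T))) (fun ω => ω t = x)) :
    -- (I)  κ(T-t-1, t) = 0 for all 0 ≤ t ≤ T-1, i.e. the redistribution is optimal
    ((∀ t : Fin (T + 1), (t : ℕ) ≤ T - 1 → ∀ x : S × A,
        (∑ ω ∈ Finset.univ.filter (fun ω => ω t = x), μ ω) ≠ 0 →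
        cexp μ
          (fun ω => ∑ τ ∈ Finset.univ.filter (fun τ : Fin (T + 1) => (t : ℕ) < (τ : ℕ)),
            h τ (ω (pd τ)) (ω τ))
          (fun ω => ω t = x) = 0)
      ↔
    -- (II)  E[R_{t+1} | s_{t-1},a_{t-1},s_t,a_t] = q̃^π(s_t,a_t) - q̃^π(s_{t-1},a_{t-1})
      (∀ (t : Fin (T + 1)) (y x : S × A),
        (∑ ω ∈ Finset.univ.filter (fun ω => ω (pd t) = y ∧ ω t = x), μ ω) ≠ 0 →
        h t y x = q t x - (if (t : ℕ) = 0 then 0 else q (pd t) y))) := by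
  obtain rfl : q = qValue μ rT := funext fun t => funext (hq t)
  constructor
  · intro hκ t y x hyx
    refine HasMarkovFactorization.eq_qValue_sub_of_cexp_futureReward_eq_zero ⟨p0, p, hμ⟩ hμ0 hret
      (fun t x hx => ?_) hyx
    by_cases ht : t = Fin.last T
    · subst ht
      rw [futureReward_last]
      exact cexp_const 0 hx
    · exact hκ t (by have := Fin.val_lt_last ht; omega) x hx
  · exact fun hdiff t _ x hx => cexp_futureReward_eq_zero_of_eq_qValue_sub hμ0 hdiff hx

/-- For a finite-horizon MDP with all reward given at the final time
step, suppose a second-order Markov reward redistribution produces a return-equivalent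
SDP.  Then, for a fixed policy `π` (encoded in the Markov trajectory distribution `μ`),
the redistribution is optimal, i.e. `κ(T-t-1, t) = 0` for all `0 ≤ t ≤ T-1`, if and
only if `E[R_{t+1} | s_{t-1}, a_{t-1}, s_t, a_t] = q̃^π(s_t,a_t) - q̃^π(s_{t-1},a_{t-1})`
for all `t` (with the convention `q̃^π(s₋₁,a₋₁) = 0`). -/
theorem optimal_reward_redistribution_iff_qvalue_differences
    {S A : Type*} [Fintype S] [Fintype A] [DecidableEq S] [DecidableEq A]
    (T : ℕ)
    -- Markov trajectory distribution of state-action pairs under the fixed policy π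
    (μ : (Fin (T + 1) → S × A) → ℝ)
    (p0 : S × A → ℝ) (p : Fin T → S × A → S × A → ℝ)
    (hμ : ∀ ω, μ ω = p0 (ω 0) * ∏ t : Fin T, p t (ω t.castSucc) (ω t.succ))
    (hμ0 : ∀ ω, 0 ≤ μ ω) (hμ1 : ∑ ω, μ ω = 1)
    -- expected delayed reward at sequence end, given the last state-action pair
    (rT : S × A → ℝ)
    -- second-order Markov redistributed reward:
    -- `h t y x = E[R_{t+1} | (s_{t-1},a_{t-1}) = y, (s_t,a_t) = x]`
    (h : Fin (T + 1) → S × A → S × A → ℝ)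
    (hfirst : ∀ y y' x, h 0 y x = h 0 y' x)  -- at t = 0 there is no real predecessor
    -- return-equivalence of the redistribution: along every possible trajectory the
    -- expected redistributed rewards sum to the expected delayed return
    (hret : ∀ ω : Fin (T + 1) → S × A, μ ω ≠ 0 →
      (∑ t : Fin (T + 1), h t (ω (pd t)) (ω t)) = rT (ω (Fin.last T)))
    -- q̃^π : action-value function of the delayed-reward MDP
    (q : Fin (T + 1) → S × A → ℝ)
    (hq : ∀ t x, q t x = cexp μ (fun ω => rT (ω (Fin.last T))) (fun ω => ω t = x)) :
    -- (I)  κ(T-t-1, t) = 0 for all 0 ≤ t ≤ T-1, i.e. the redistribution is optimal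
    ((∀ t : Fin (T + 1), (t : ℕ) ≤ T - 1 → ∀ x : S × A,
        (∑ ω ∈ Finset.univ.filter (fun ω => ω t = x), μ ω) ≠ 0 →
        cexp μ
          (fun ω => ∑ τ ∈ Finset.univ.filter (fun τ : Fin (T + 1) => (t : ℕ) < (τ : ℕ)),
            h τ (ω (pd τ)) (ω τ))
          (fun ω => ω t = x) = 0)
      ↔
    -- (II)  E[R_{t+1} | s_{t-1},a_{t-1},s_t,a_t] = q̃^π(s_t,a_t) - q̃^π(s_{t-1},a_{t-1})
      (∀ (t : Fin (T + 1)) (y x : S × A),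
        (∑ ω ∈ Finset.univ.filter (fun ω => ω (pd t) = y ∧ ω t = x), μ ω) ≠ 0 →
        h t y x = q t x - (if (t : ℕ) = 0 then 0 else q (pd t) y))) :=
  optimal_reward_redistribution_iff_qvalue_differences_general T μ p0 p hμ hμ0 rT h hret q hq
end

section
/- For a Markov decision process with finite horizon and discount γ, the action-value function q^π and the variance V^π of the return satisfy the Bellman-type recursions: q^π(s,a) = r(s,a) + γ E_{s',a'}[q^π(s',a') | s,a] and V^π(s,a) = Var_r[r | s,a] + γ² (E_{s',a'}[V^π(s',a') | s,a] + Var_{s',a'}[q^π(s',a') | s,a]). -/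
/-!
Conditioned on the state–action pair at time `t`, the rest of the trajectory is a Markov path
started there, independent of the past (the trajectory weight factors at time `t`). Hence `q t`
and `M t` are the mean and second moment of the discounted return of that path. First-step
analysis writes this return as `r + γ G'`, with `r ∼ ν x` and `G'` the return of a path started
at `x' ∼ p x`; taking expectations of `r + γ G'` and of its square and subtracting gives both
recursions, the second being the law of total variance.
-/
open Finset

theorem Fintype.sum_pi_fin_succ {Y : Type*} [Fintype Y] {M : Type*} [AddCommMonoid M] (m : ℕ)
    (f : (Fin (m + 1) → Y) → M) :
    ∑ β, f β = ∑ y, ∑ τ : Fin m → Y, f (Fin.cons y τ) := by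
  rw [← (Fin.consEquiv fun _ => Y).sum_comp, Fintype.sum_prod_type]
  rfl

theorem Finset.sum_mul_sub_sum_mul_sq {ι : Type*} (s : Finset ι) (w f : ι → ℝ)
    (hw : ∑ i ∈ s, w i = 1) :
    ∑ i ∈ s, w i * (f i - ∑ j ∈ s, w j * f j) ^ 2 =
      ∑ i ∈ s, w i * f i ^ 2 - (∑ i ∈ s, w i * f i) ^ 2 := by
  set a := ∑ j ∈ s, w j * f j
  have hexp : ∀ i, w i * (f i - a) ^ 2 = w i * f i ^ 2 - 2 * a * (w i * f i) + a ^ 2 * w i :=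
    fun i => by ring
  simp only [hexp, sum_add_distrib, sum_sub_distrib, ← mul_sum, hw]
  ring

theorem Finset.sum_mul_congr_of_ne_zero {ι : Type*} (s : Finset ι) {w f g : ι → ℝ}
    (h : ∀ i ∈ s, w i ≠ 0 → f i = g i) : ∑ i ∈ s, w i * f i = ∑ i ∈ s, w i * g i :=
  sum_congr rfl fun i hi => by
    by_cases hw : w i = 0
    · rw [hw, zero_mul, zero_mul]
    · rw [h i hi hw]

section Paths

variable {X R : Type*}

def pathWeight (p : X → X → ℝ) (ν : X → R → ℝ) {m : ℕ} (β : Fin (m + 1) → X × R) : ℝ :=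
  (∏ k : Fin m, p (β k.castSucc).1 (β k.succ).1) * ∏ k, ν (β k).1 (β k).2

def discountedReturn (γ : ℝ) (rv : R → ℝ) {m : ℕ} (β : Fin (m + 1) → X × R) : ℝ :=
  ∑ k : Fin (m + 1), γ ^ (k : ℕ) * rv (β k).2

def trajWeight (p : X → X → ℝ) (ν : X → R → ℝ) (p₀ : X → ℝ) {T : ℕ}
    (ω : Fin (T + 1) → X × R) : ℝ :=
  p₀ (ω 0).1 * pathWeight p ν ω

def trajSuffix {Y : Type*} {T : ℕ} (n m : ℕ) (h : n + m = T) (ω : Fin (T + 1) → Y) :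
    Fin (m + 1) → Y :=
  fun k => ω ⟨n + k, by omega⟩

variable {p : X → X → ℝ} {ν : X → R → ℝ}

theorem pathWeight_cons {m : ℕ} (y : X × R) (β : Fin (m + 1) → X × R) :
    pathWeight p ν (Fin.cons y β : Fin (m + 2) → X × R) =
      ν y.1 y.2 * p y.1 (β 0).1 * pathWeight p ν β := by
  simp only [pathWeight, Fin.prod_univ_succ, Fin.cons_zero, Fin.cons_succ, Fin.castSucc_zero,
    ← Fin.succ_castSucc]
  ring

theorem discountedReturn_cons (γ : ℝ) (rv : R → ℝ) {m : ℕ} (y : X × R)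
    (β : Fin (m + 1) → X × R) :
    discountedReturn γ rv (Fin.cons y β : Fin (m + 2) → X × R) =
      rv y.2 + γ * discountedReturn γ rv β := by
  simp only [discountedReturn, Fin.sum_univ_succ (n := m + 1), Fin.cons_zero, Fin.cons_succ,
    Fin.val_zero, pow_zero, one_mul, Fin.val_succ, pow_succ', mul_assoc, mul_sum]

theorem trajWeight_nonneg {p₀ : X → ℝ} (hp₀ : ∀ x, 0 ≤ p₀ x) (hp : ∀ x x', 0 ≤ p x x')
    (hν : ∀ x j, 0 ≤ ν x j) {T : ℕ} (ω : Fin (T + 1) → X × R) : 0 ≤ trajWeight p ν p₀ ω :=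
  mul_nonneg (hp₀ _) <| mul_nonneg (prod_nonneg fun _ _ => hp _ _) (prod_nonneg fun _ _ => hν _ _)

theorem trajWeight_cons (p₀ : X → ℝ) {T : ℕ} (y : X × R) (ω : Fin (T + 1) → X × R) :
    trajWeight p ν p₀ (Fin.cons y ω : Fin (T + 2) → X × R) =
      trajWeight p ν (fun x' => p₀ y.1 * ν y.1 y.2 * p y.1 x') ω := by
  simp only [trajWeight, pathWeight_cons, Fin.cons_zero]
  ring

theorem trajSuffix_zero {Y : Type*} {m : ℕ} (h : 0 + m = m) (ω : Fin (m + 1) → Y) :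
    trajSuffix 0 m h ω = ω :=
  funext fun _ => congrArg ω (Fin.ext (zero_add _))

theorem trajSuffix_cons {Y : Type*} {T n m : ℕ} (h : n + 1 + m = T + 1) (y : Y)
    (ω : Fin (T + 1) → Y) :
    trajSuffix (n + 1) m h (Fin.cons y ω : Fin (T + 2) → Y) = trajSuffix n m (by omega) ω := by
  funext k
  have hk : (⟨n + 1 + k, by omega⟩ : Fin (T + 2)) = Fin.succ ⟨n + k, by omega⟩ :=
    Fin.ext (by simp only [Fin.val_succ]; omega)
  simp only [trajSuffix, hk, Fin.cons_succ]

theorem sum_pow_mul_eq_discountedReturn_trajSuffix (γ : ℝ) (rv : R → ℝ) {T m : ℕ}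
    (t : Fin (T + 1)) (h : t.1 + m = T) (ω : Fin (T + 1) → X × R) :
    ∑ k : Fin (T + 1 - t.1), γ ^ (k : ℕ) * rv (ω ⟨t.1 + k.1, by omega⟩).2 =
      discountedReturn γ rv (trajSuffix t m h ω) :=
  Fintype.sum_equiv (finCongr (by omega)) _ _ fun _ => rfl

end Paths

section PathExpectation

variable {X R : Type*} [Fintype X] [DecidableEq X] [Fintype R]

noncomputable def pathExp (p : X → X → ℝ) (ν : X → R → ℝ) (m : ℕ) (x : X)
    (f : (Fin (m + 1) → X × R) → ℝ) : ℝ :=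
  ∑ β with (β 0).1 = x, pathWeight p ν β * f β

variable (p : X → X → ℝ) (ν : X → R → ℝ)

theorem pathExp_succ (m : ℕ) (x : X) (f : (Fin (m + 2) → X × R) → ℝ) :
    pathExp p ν (m + 1) x f =
      ∑ j, ν x j * ∑ x', p x x' * pathExp p ν m x' (fun τ => f (Fin.cons (x, j) τ)) := by
  rw [pathExp, sum_filter, Fintype.sum_pi_fin_succ, Fintype.sum_prod_type,
    sum_eq_single x (fun x' _ hx' => by simp [hx']) (by simp)]
  refine sum_congr rfl fun j _ => ?_
  simp only [pathExp, sum_filter, Fin.cons_zero, if_true, pathWeight_cons, mul_sum]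
  rw [sum_comm]
  refine sum_congr rfl fun τ _ => ?_
  rw [sum_eq_single (τ 0).1 (fun x' _ hx' => by simp [Ne.symm hx']) (by simp), if_pos rfl]
  ring

theorem pathExp_add (m : ℕ) (x : X) (f g : (Fin (m + 1) → X × R) → ℝ) :
    pathExp p ν m x (fun β => f β + g β) = pathExp p ν m x f + pathExp p ν m x g := by
  simp only [pathExp, mul_add, sum_add_distrib]

theorem pathExp_const_mul (m : ℕ) (x : X) (c : ℝ) (f : (Fin (m + 1) → X × R) → ℝ) :
    pathExp p ν m x (fun β => c * f β) = c * pathExp p ν m x f := by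
  simp only [pathExp, mul_sum, mul_left_comm]

variable {p ν}

theorem pathExp_const (hp : ∀ x, ∑ x', p x x' = 1) (hν : ∀ x, ∑ j, ν x j = 1)
    (m : ℕ) (x : X) (c : ℝ) : pathExp p ν m x (fun _ => c) = c := by
  induction m generalizing x with
  | zero =>
    rw [pathExp, sum_filter, ← (Equiv.funUnique (Fin 1) (X × R)).symm.sum_comp,
      Fintype.sum_prod_type, sum_eq_single x (fun x' _ hx' => by simp [hx']) (by simp)]
    simp [pathWeight, ← sum_mul, hν]
  | succ m ih => simp only [pathExp_succ, ih, ← sum_mul, hp, hν, one_mul]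

theorem pathExp_state (hp : ∀ x, ∑ x', p x x' = 1) (hν : ∀ x, ∑ j, ν x j = 1)
    (m : ℕ) (x : X) (Φ : X → ℝ) : pathExp p ν m x (fun β => Φ (β 0).1) = Φ x :=
  calc pathExp p ν m x (fun β => Φ (β 0).1)
      = pathExp p ν m x (fun _ => Φ x) :=
        sum_congr rfl fun β hβ => by simp only [(mem_filter.1 hβ).2]
    _ = Φ x := pathExp_const hp hν m x (Φ x)

theorem pathExp_next (hp : ∀ x, ∑ x', p x x' = 1) (hν : ∀ x, ∑ j, ν x j = 1)
    (m : ℕ) (x : X) (Φ : X → ℝ) :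
    pathExp p ν (m + 1) x (fun β => Φ (β 1).1) = ∑ x', p x x' * Φ x' := by
  simp only [pathExp_succ, Fin.cons_one, pathExp_state hp hν, ← sum_mul, hν, one_mul]

theorem pathExp_discountedReturn_succ (hp : ∀ x, ∑ x', p x x' = 1)
    (hν : ∀ x, ∑ j, ν x j = 1) (γ : ℝ) (rv : R → ℝ) (m : ℕ) (x : X) :
    pathExp p ν (m + 1) x (discountedReturn γ rv) =
      ∑ j, ν x j * rv j + γ * ∑ x', p x x' * pathExp p ν m x' (discountedReturn γ rv) := by
  have hsplit : ∀ j x' (e : ℝ), ν x j * (p x x' * (rv j + γ * e)) =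
      p x x' * (ν x j * rv j) + ν x j * (γ * (p x x' * e)) := fun _ _ _ => by ring
  simp only [pathExp_succ, discountedReturn_cons, pathExp_add, pathExp_const hp hν,
    pathExp_const_mul]
  conv_lhs => simp only [mul_sum, hsplit, sum_add_distrib]
  simp only [← sum_mul, ← mul_sum, hp, hν, one_mul]

theorem pathExp_discountedReturn_sq_succ (hp : ∀ x, ∑ x', p x x' = 1)
    (hν : ∀ x, ∑ j, ν x j = 1) (γ : ℝ) (rv : R → ℝ) (m : ℕ) (x : X) :
    pathExp p ν (m + 1) x (fun β => discountedReturn γ rv β ^ 2) =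
      ∑ j, ν x j * rv j ^ 2 +
        2 * γ * (∑ j, ν x j * rv j) * (∑ x', p x x' * pathExp p ν m x' (discountedReturn γ rv)) +
        γ ^ 2 * ∑ x', p x x' * pathExp p ν m x' (fun β => discountedReturn γ rv β ^ 2) := by
  have hsplit : ∀ j x' (e e₂ : ℝ),
      ν x j * (p x x' * (rv j ^ 2 + 2 * rv j * (γ * e) + γ ^ 2 * e₂)) =
        p x x' * (ν x j * rv j ^ 2) + ν x j * rv j * (2 * γ * (p x x' * e)) +
          ν x j * (γ ^ 2 * (p x x' * e₂)) := fun _ _ _ _ => by ring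
  simp only [pathExp_succ, discountedReturn_cons, add_sq, mul_pow, pathExp_add,
    pathExp_const hp hν, pathExp_const_mul]
  conv_lhs => simp only [mul_sum, hsplit, sum_add_distrib]
  simp only [← sum_mul, ← mul_sum, hp, hν, one_mul]
  ring

end PathExpectation

section MarkovProperty

variable {X R : Type*} [Fintype X] [DecidableEq X] [Fintype R] {p : X → X → ℝ} {ν : X → R → ℝ}

/-- Induction on `n` absorbs the first step of the trajectory into the initial law `p₀`;
what matters is that `c` does not depend on `f`. -/
theorem exists_sum_filter_trajWeight_mul_trajSuffix (m : ℕ) (x : X) :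
    ∀ (n T : ℕ) (p₀ : X → ℝ) (h : n + m = T), ∃ c : ℝ, ∀ f : (Fin (m + 1) → X × R) → ℝ,
      ∑ ω with (ω ⟨n, by omega⟩).1 = x, trajWeight p ν p₀ ω * f (trajSuffix n m h ω) =
        c * pathExp p ν m x f := by
  intro n
  induction n with
  | zero =>
    intro T p₀ h
    obtain rfl : T = m := by omega
    refine ⟨p₀ x, fun f => ?_⟩
    simp only [trajSuffix_zero, Fin.zero_eta, pathExp, mul_sum]
    exact sum_congr rfl fun ω hω => by simp only [trajWeight, (mem_filter.1 hω).2, mul_assoc]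
  | succ n ih =>
    intro T p₀ h
    obtain ⟨T, rfl⟩ : ∃ T', T = T' + 1 := ⟨n + m, by omega⟩
    choose c hc using fun y : X × R => ih T (fun x' => p₀ y.1 * ν y.1 y.2 * p y.1 x') (by omega)
    refine ⟨∑ y, c y, fun f => ?_⟩
    rw [sum_filter, Fintype.sum_pi_fin_succ, sum_mul]
    refine sum_congr rfl fun y _ => ?_
    rw [← hc y f, sum_filter]
    refine sum_congr rfl fun ω _ => ?_
    rw [trajWeight_cons, trajSuffix_cons]
    rfl

theorem sum_filter_trajWeight_mul_trajSuffix (hp : ∀ x, ∑ x', p x x' = 1)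
    (hν : ∀ x, ∑ j, ν x j = 1) (p₀ : X → ℝ) {T m : ℕ} (t : Fin (T + 1)) (h : t.1 + m = T)
    (x : X) (f : (Fin (m + 1) → X × R) → ℝ) :
    ∑ ω with (ω t).1 = x, trajWeight p ν p₀ ω * f (trajSuffix t m h ω) =
      (∑ ω with (ω t).1 = x, trajWeight p ν p₀ ω) * pathExp p ν m x f := by
  obtain ⟨c, hc⟩ := exists_sum_filter_trajWeight_mul_trajSuffix (p := p) (ν := ν) m x t T p₀ h
  have hmass := hc fun _ => 1
  simp only [mul_one, pathExp_const hp hν] at hmass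
  exact (hc f).trans (by rw [hmass])

theorem cexp_trajSuffix (hp : ∀ x, ∑ x', p x x' = 1) (hν : ∀ x, ∑ j, ν x j = 1)
    (p₀ : X → ℝ) {T m : ℕ} (t : Fin (T + 1)) (h : t.1 + m = T) (x : X)
    (hmass : ∑ ω with (ω t).1 = x, trajWeight p ν p₀ ω ≠ 0)
    (f : (Fin (m + 1) → X × R) → ℝ) :
    cexp (trajWeight p ν p₀) (fun ω => f (trajSuffix t m h ω)) (fun ω => (ω t).1 = x) =
      pathExp p ν m x f := by
  rw [cexp, sum_filter_trajWeight_mul_trajSuffix hp hν, mul_div_cancel_left₀ _ hmass]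

theorem cexp_next_state (hp : ∀ x, ∑ x', p x x' = 1) (hν : ∀ x, ∑ j, ν x j = 1)
    (p₀ : X → ℝ) {T m : ℕ} (t : Fin (T + 1)) (h : t.1 + (m + 1) = T) (x : X)
    (hmass : ∑ ω with (ω t).1 = x, trajWeight p ν p₀ ω ≠ 0) (Φ : X → ℝ) :
    cexp (trajWeight p ν p₀) (fun ω => Φ (ω ⟨t.1 + 1, by omega⟩).1) (fun ω => (ω t).1 = x) =
      ∑ x', p x x' * Φ x' :=
  (cexp_trajSuffix hp hν p₀ t h x hmass fun β => Φ (β 1).1).trans (pathExp_next hp hν m x Φ)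

theorem sum_filter_trajWeight_succ_ne_zero (hp : ∀ x, ∑ x', p x x' = 1)
    (hν : ∀ x, ∑ j, ν x j = 1) {p₀ : X → ℝ} {T m : ℕ}
    (hw : ∀ ω : Fin (T + 1) → X × R, 0 ≤ trajWeight p ν p₀ ω) (t : Fin (T + 1))
    (h : t.1 + (m + 1) = T) {x x' : X}
    (hmass : ∑ ω with (ω t).1 = x, trajWeight p ν p₀ ω ≠ 0) (hpx : 0 < p x x') :
    ∑ ω : Fin (T + 1) → X × R with (ω ⟨t.1 + 1, by omega⟩).1 = x', trajWeight p ν p₀ ω ≠ 0 := by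
  have hjoint : ∑ ω with (ω t).1 = x ∧ (trajSuffix t (m + 1) h ω 1).1 = x', trajWeight p ν p₀ ω =
      (∑ ω with (ω t).1 = x, trajWeight p ν p₀ ω) * p x x' := by
    have hind := sum_filter_trajWeight_mul_trajSuffix hp hν p₀ t h x
      (fun β => if (β 1).1 = x' then (1 : ℝ) else 0)
    rw [pathExp_next hp hν m x (fun y => if y = x' then 1 else 0)] at hind
    simp only [mul_ite, mul_one, mul_zero, sum_ite_eq', mem_univ, if_true] at hind
    rwa [← sum_filter, filter_filter] at hind
  have hle : ∑ ω with (ω t).1 = x ∧ (trajSuffix t (m + 1) h ω 1).1 = x', trajWeight p ν p₀ ω ≤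
      ∑ ω : Fin (T + 1) → X × R with (ω ⟨t.1 + 1, by omega⟩).1 = x', trajWeight p ν p₀ ω :=
    sum_le_sum_of_subset_of_nonneg (monotone_filter_right _ fun _ _ hω => hω.2) fun ω _ _ => hw ω
  exact ((mul_pos ((sum_nonneg fun ω _ => hw ω).lt_of_ne' hmass) hpx).trans_le
    (hjoint ▸ hle)).ne'

end MarkovProperty

/-- For a finite-horizon MDP with discount `γ`, the action-value
function `q^π` and the variance `V^π` of the return satisfy the Bellman-type
recursions
`q^π(s,a) = r(s,a) + γ E_{s',a'}[q^π(s',a') | s,a]` and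
`V^π(s,a) = Var_r[r|s,a] + γ² (E_{s',a'}[V^π(s',a')|s,a] + Var_{s',a'}[q^π(s',a')|s,a])`.
Trajectories record the state-action pair and the sampled reward index at each step;
`μ` is the Markov trajectory distribution combining transitions, policy and reward
distribution. -/
theorem bellman_recursion_mean_and_variance
    {S A R : Type*} [Fintype S] [Fintype A] [Fintype R]
    [DecidableEq S] [DecidableEq A]
    (T : ℕ) (γ : ℝ)
    (p0 : S × A → ℝ) (p : S × A → S × A → ℝ)     -- p(s'|s,a) π(a'|s')
    (ν : S × A → R → ℝ) (rv : R → ℝ)             -- reward distribution and values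
    (hp00 : ∀ x, 0 ≤ p0 x)
    (hp0 : ∀ x y, 0 ≤ p x y) (hp1 : ∀ x, ∑ y, p x y = 1)
    (hν0 : ∀ x j, 0 ≤ ν x j) (hν1 : ∀ x, ∑ j, ν x j = 1)
    (μ : (Fin (T + 1) → (S × A) × R) → ℝ)
    (hμ : ∀ ω, μ ω =
      p0 (ω 0).1 * (∏ t : Fin T, p (ω t.castSucc).1 (ω t.succ).1) *
        ∏ t : Fin (T + 1), ν (ω t).1 (ω t).2)
    -- the return G_t = ∑_{k=0}^{T-t} γ^k R_{t+k+1}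
    (G : Fin (T + 1) → (Fin (T + 1) → (S × A) × R) → ℝ)
    (hG : ∀ t ω, G t ω =
      ∑ k : Fin (T + 1 - t.1), γ ^ (k : ℕ) *
        rv (ω ⟨t.1 + k.1, by have := k.2; have := t.2; omega⟩).2)
    -- q^π, second moment M^π and variance V^π of the return
    (q M V : Fin (T + 1) → S × A → ℝ)
    (hq : ∀ t x, q t x = cexp μ (G t) (fun ω => (ω t).1 = x))
    (hM : ∀ t x, M t x = cexp μ (fun ω => (G t ω) ^ 2) (fun ω => (ω t).1 = x))
    (hV : ∀ t x, V t x = M t x - (q t x) ^ 2)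
    -- mean and variance of the immediate reward
    (rbar : S × A → ℝ) (hrbar : ∀ x, rbar x = ∑ j, ν x j * rv j)
    (varr : S × A → ℝ) (hvarr : ∀ x, varr x = ∑ j, ν x j * (rv j - rbar x) ^ 2) :
    ∀ (t : Fin (T + 1)) (ht : t.1 < T) (x : S × A),
      (∑ ω ∈ Finset.univ.filter (fun ω => (ω t).1 = x), μ ω) ≠ 0 →
      -- Bellman equation for the mean
      (q t x = rbar x + γ *
        cexp μ (fun ω => q ⟨t.1 + 1, by omega⟩ (ω ⟨t.1 + 1, by omega⟩).1)
          (fun ω => (ω t).1 = x)) ∧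
      -- Bellman-type equation for the variance
      (V t x = varr x + γ ^ 2 *
        (cexp μ (fun ω => V ⟨t.1 + 1, by omega⟩ (ω ⟨t.1 + 1, by omega⟩).1)
            (fun ω => (ω t).1 = x) +
         (cexp μ (fun ω => (q ⟨t.1 + 1, by omega⟩ (ω ⟨t.1 + 1, by omega⟩).1) ^ 2)
            (fun ω => (ω t).1 = x) -
          (cexp μ (fun ω => q ⟨t.1 + 1, by omega⟩ (ω ⟨t.1 + 1, by omega⟩).1)
            (fun ω => (ω t).1 = x)) ^ 2))) := by
  intro t _ x hmass
  obtain rfl : μ = trajWeight p ν p0 :=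
    funext fun ω => by rw [hμ, trajWeight, pathWeight, mul_assoc]
  have hvalue : ∀ (u : Fin (T + 1)) (m : ℕ) (h : u.1 + m = T) (y : S × A),
      ∑ ω with (ω u).1 = y, trajWeight p ν p0 ω ≠ 0 →
        q u y = pathExp p ν m y (discountedReturn γ rv) ∧
          M u y = pathExp p ν m y (fun β => discountedReturn γ rv β ^ 2) := by
    intro u m h y hy
    have hGu : G u = fun ω => discountedReturn γ rv (trajSuffix u m h ω) :=
      funext fun ω => (hG u ω).trans (sum_pow_mul_eq_discountedReturn_trajSuffix γ rv u h ω)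
    rw [hq, hM, hGu]
    exact ⟨cexp_trajSuffix hp1 hν1 p0 u h y hy _,
      cexp_trajSuffix hp1 hν1 p0 u h y hy fun β => discountedReturn γ rv β ^ 2⟩
  obtain ⟨m, hm⟩ : ∃ m, t.1 + (m + 1) = T := ⟨T - t.1 - 1, by omega⟩
  obtain ⟨hqt, hMt⟩ := hvalue t (m + 1) hm x hmass
  set t' : Fin (T + 1) := ⟨t.1 + 1, by omega⟩
  -- `cexp` divides by the mass of the event, so at time `t + 1` the value functions are
  -- identified only at states of positive mass; these include every `y` with `p x y ≠ 0`.
  have hnext : ∀ y ∈ univ, p x y ≠ 0 → q t' y = pathExp p ν m y (discountedReturn γ rv) ∧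
      M t' y = pathExp p ν m y (fun β => discountedReturn γ rv β ^ 2) := fun y _ hy =>
    hvalue t' m (by simp only [t']; omega) y <| sum_filter_trajWeight_succ_ne_zero hp1 hν1
      (trajWeight_nonneg hp00 hp0 hν0) t hm hmass ((hp0 x y).lt_of_ne' hy)
  have hnext_q := sum_mul_congr_of_ne_zero univ fun y hy hxy => (hnext y hy hxy).1
  have hnext_q_sq := sum_mul_congr_of_ne_zero univ (f := fun y => q t' y ^ 2)
    fun y hy hxy => by rw [(hnext y hy hxy).1]
  have hnext_V := sum_mul_congr_of_ne_zero univ (f := V t')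
    fun y hy hxy => by rw [hV, (hnext y hy hxy).1, (hnext y hy hxy).2]
  simp only [mul_sub, sum_sub_distrib] at hnext_V
  rw [cexp_next_state hp1 hν1 p0 t hm x hmass (q t'),
    cexp_next_state hp1 hν1 p0 t hm x hmass (fun y => q t' y ^ 2),
    cexp_next_state hp1 hν1 p0 t hm x hmass (V t'), hnext_q, hnext_q_sq, hnext_V, hV, hqt, hMt,
    pathExp_discountedReturn_succ hp1 hν1, pathExp_discountedReturn_sq_succ hp1 hν1, hvarr,
    hrbar, sum_mul_sub_sum_mul_sq _ _ _ (hν1 x)]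
  exact ⟨rfl, by ring⟩
end

section
/- In linear regression, the increase in the coefficient of determination when adding a new variable z to predictors x equals R²_{yw} − R²_{yx} = (r̂_{yz} − r_{yz})² / (1 − R²_{zx}), where r̂_{yz} = (β̂*_{zx})ᵀ r_{yx} is the predicted correlation of z with y based on the regression of z on x; moreover this increase equals the squared correlation r²_{ey} between the target y and the residual e = ẑ − z of predicting z from x. -/
/-!
Write `e = ẑ - z`. The residuals `y - ŷ_x`, `y - ŷ_w` and `e` are orthogonal to the constants and
to the columns of `x`, while `ŷ_w - ŷ_x + b_z e` (with `b_z` the coefficient of `z` in `ŷ_w`) is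
an affine function of `x` that is orthogonal to them as well, hence zero. So `ŷ_w - ŷ_x` is a multiple
of `e`, and the normal equation for `z` fixes the multiple as `⟨e, y⟩ / ⟨e, e⟩`. The residual sum
of squares therefore drops by `⟨e, y⟩² / ⟨e, e⟩`, which makes the gain in `R²` equal to `r²_{ey}`.

For the correlation form, `R_xx⁻¹ r_zx` is the coefficient vector of `ẑ` rescaled by
`s_{x_l} / s_z`, so `β̂*ᵀ r_yx = s_{ẑy} / (s_y s_z)`. Since `ẑ = z + e` with `e` uncorrelated
with `ẑ`, the numerator becomes `s_{ey} / (s_y s_z)` and `1 - R²_zx` becomes `s_e² / s_z²`.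
-/

open Matrix

/-- Sample mean. -/
noncomputable def smean {n : ℕ} (v : Fin n → ℝ) : ℝ := (∑ i, v i) / n

/-- Sample covariance. -/
noncomputable def scov {n : ℕ} (v w : Fin n → ℝ) : ℝ :=
  (∑ i, (v i - smean v) * (w i - smean w)) / ((n : ℝ) - 1)

/-- Sample standard deviation. -/
noncomputable def sstd {n : ℕ} (v : Fin n → ℝ) : ℝ := Real.sqrt (scov v v)

/-- Sample correlation. -/
noncomputable def scorr {n : ℕ} (v w : Fin n → ℝ) : ℝ := scov v w / (sstd v * sstd w)

/-- Coefficient of determination `R² = 1 - mse / s_v²` of a fit. -/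
noncomputable def rsq {n : ℕ} (v fit : Fin n → ℝ) : ℝ :=
  1 - ((∑ i, (fit i - v i) ^ 2) / ((n : ℝ) - 1)) / scov v v

section SampleStatistics

variable {n : ℕ}

lemma scov_comm (v w : Fin n → ℝ) : scov v w = scov w v := by
  simp only [scov, mul_comm]

lemma smean_sub (u v : Fin n → ℝ) : smean (u - v) = smean u - smean v := by
  simp only [smean, Pi.sub_apply, Finset.sum_sub_distrib, sub_div]

lemma scov_sub_left (u v w : Fin n → ℝ) : scov (u - v) w = scov u w - scov v w := by
  simp only [scov, smean_sub, Pi.sub_apply, ← sub_div, ← Finset.sum_sub_distrib]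
  congr 1
  exact Finset.sum_congr rfl fun i _ => by ring

lemma scov_eq_dotProduct_of_sum_eq_zero {u : Fin n → ℝ} (hu : ∑ i, u i = 0)
    (w : Fin n → ℝ) : scov u w = u ⬝ᵥ w / ((n : ℝ) - 1) := by
  have hmean : smean u = 0 := by simp [smean, hu]
  simp only [scov, hmean, sub_zero, mul_sub, Finset.sum_sub_distrib, ← Finset.sum_mul, hu,
    zero_mul, dotProduct]

lemma scov_self_nonneg (v : Fin n → ℝ) : 0 ≤ scov v v := by
  rcases Nat.eq_zero_or_pos n with rfl | hn
  · simp [scov]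
  · exact div_nonneg (Finset.sum_nonneg fun i _ => mul_self_nonneg _)
      (sub_nonneg.mpr (Nat.one_le_cast.mpr hn))

lemma sstd_sq (v : Fin n → ℝ) : sstd v ^ 2 = scov v v :=
  Real.sq_sqrt (scov_self_nonneg v)

lemma sstd_ne_zero {v : Fin n → ℝ} (hv : scov v v ≠ 0) : sstd v ≠ 0 :=
  Real.sqrt_ne_zero'.mpr ((scov_self_nonneg v).lt_of_ne' hv)

lemma scorr_sq (v w : Fin n → ℝ) : scorr v w ^ 2 = scov v w ^ 2 / (scov v v * scov w w) := by
  rw [scorr, div_pow, mul_pow, sstd_sq, sstd_sq]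

lemma sum_sub_smean (w : Fin n → ℝ) : ∑ i, (w i - smean w) = 0 := by
  rcases Nat.eq_zero_or_pos n with rfl | hn
  · simp
  · rw [Finset.sum_sub_distrib, Finset.sum_const, Finset.card_univ, Fintype.card_fin,
      nsmul_eq_mul, smean, mul_div_cancel₀ _ (Nat.cast_ne_zero.mpr hn.ne'), sub_self]

lemma scov_eq_sum_mul (v w : Fin n → ℝ) :
    scov v w = (∑ i, v i * (w i - smean w)) / ((n : ℝ) - 1) := by
  rw [scov, Finset.sum_congr rfl fun i _ => sub_mul _ _ _, Finset.sum_sub_distrib,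
    ← Finset.mul_sum, sum_sub_smean, mul_zero, sub_zero]

lemma scov_affine_left {k : ℕ} (x : Fin n → Fin k → ℝ) (a : ℝ) (c : Fin k → ℝ)
    (w : Fin n → ℝ) :
    scov (fun i => a + ∑ l, c l * x i l) w = ∑ l, c l * scov (x · l) w := by
  simp only [scov_eq_sum_mul, add_mul, Finset.sum_add_distrib, ← Finset.mul_sum, sum_sub_smean,
    mul_zero, zero_add, Finset.sum_mul, mul_div_assoc, Finset.sum_div]
  rw [Finset.sum_comm]
  exact Finset.sum_congr rfl fun l _ => by simp only [Finset.mul_sum, mul_assoc]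

end SampleStatistics

section LeastSquares

variable {n k : ℕ} (x : Fin n → Fin k → ℝ)

def affineFunctions : Submodule ℝ (Fin n → ℝ) where
  carrier := {v | ∃ (b0 : ℝ) (b : Fin k → ℝ), ∀ i, v i = b0 + ∑ j, b j * x i j}
  zero_mem' := ⟨0, 0, by simp⟩
  add_mem' := by
    rintro u v ⟨a, b, hu⟩ ⟨a', b', hv⟩
    exact ⟨a + a', b + b', fun i => by
      simp only [Pi.add_apply, hu, hv, add_mul, Finset.sum_add_distrib]; ring⟩
  smul_mem' := by
    rintro t v ⟨a, b, hv⟩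
    exact ⟨t * a, t • b, fun i => by
      simp only [Pi.smul_apply, hv, smul_eq_mul, mul_add, Finset.mul_sum, mul_assoc]⟩

def residualSpace : Submodule ℝ (Fin n → ℝ) where
  carrier := {u | ∑ i, u i = 0 ∧ ∀ j, ∑ i, u i * x i j = 0}
  zero_mem' := by simp
  add_mem' := by
    rintro u v ⟨hu0, hu⟩ ⟨hv0, hv⟩
    refine ⟨by simp [Finset.sum_add_distrib, hu0, hv0], fun j => ?_⟩
    simp [add_mul, Finset.sum_add_distrib, hu, hv]
  smul_mem' := by
    rintro t u ⟨hu0, hu⟩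
    refine ⟨by simp [← Finset.mul_sum, hu0], fun j => ?_⟩
    simp [mul_assoc, ← Finset.mul_sum, hu]

variable {x}

lemma dotProduct_eq_zero_of_mem_residualSpace {u v : Fin n → ℝ} (hu : u ∈ residualSpace x)
    (hv : v ∈ affineFunctions x) : u ⬝ᵥ v = 0 := by
  obtain ⟨hu0, hux⟩ := hu
  obtain ⟨b0, b, hv⟩ := hv
  simp only [dotProduct, hv, mul_add, Finset.sum_add_distrib, ← Finset.sum_mul, hu0, zero_mul,
    zero_add, Finset.mul_sum]
  rw [Finset.sum_comm]
  exact Finset.sum_eq_zero fun j _ => by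
    simp only [mul_left_comm (u _), ← Finset.mul_sum, hux, mul_zero]

lemma eq_zero_of_mem_affineFunctions_of_mem_residualSpace {u : Fin n → ℝ}
    (hu : u ∈ affineFunctions x) (hu' : u ∈ residualSpace x) : u = 0 :=
  dotProduct_self_eq_zero.mp (dotProduct_eq_zero_of_mem_residualSpace hu' hu)

theorem fit_sub_fit_eq_smul_residual {y z yx yw zx : Fin n → ℝ} {bz : ℝ}
    (hyx : yx ∈ affineFunctions x) (hr : y - yx ∈ residualSpace x)
    (hyw : yw - bz • z ∈ affineFunctions x) (hs : y - yw ∈ residualSpace x)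
    (hsz : (y - yw) ⬝ᵥ z = 0)
    (hzx : zx ∈ affineFunctions x) (he : zx - z ∈ residualSpace x)
    (hee : (zx - z) ⬝ᵥ (zx - z) ≠ 0) :
    yw - yx = ((zx - z) ⬝ᵥ y / (zx - z) ⬝ᵥ (zx - z)) • (zx - z) := by
  set e := zx - z
  have hbz : yw - yx = -bz • e := by
    rw [neg_smul, eq_neg_iff_add_eq_zero]
    apply eq_zero_of_mem_affineFunctions_of_mem_residualSpace
    · have : yw - yx + bz • e = yw - bz • z - yx + bz • zx := by
        simp only [e, smul_sub]; abel
      rw [this]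
      exact add_mem (sub_mem hyw hyx) (Submodule.smul_mem _ _ hzx)
    · have : yw - yx + bz • e = (y - yx) - (y - yw) + bz • e := by abel
      rw [this]
      exact add_mem (sub_mem hr hs) (Submodule.smul_mem _ _ he)
  have hse : (y - yw) ⬝ᵥ e = 0 := by
    rw [dotProduct_sub, dotProduct_eq_zero_of_mem_residualSpace hs hzx, hsz, sub_self]
  have hre : (y - yx) ⬝ᵥ e = e ⬝ᵥ y := by
    rw [sub_dotProduct, dotProduct_comm yx, dotProduct_eq_zero_of_mem_residualSpace he hyx,
      sub_zero, dotProduct_comm]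
  have hs' : y - yw = (y - yx) + bz • e := by
    rw [← sub_sub_sub_cancel_right y yw yx, hbz, neg_smul, sub_neg_eq_add]
  rw [hs', add_dotProduct, hre, smul_dotProduct, smul_eq_mul] at hse
  rw [hbz, (eq_div_iff hee).mpr (by linarith : -bz * e ⬝ᵥ e = e ⬝ᵥ y)]

end LeastSquares

section Gain

variable {n : ℕ}

lemma sum_sub_sq_eq_dotProduct (u v : Fin n → ℝ) :
    ∑ i, (u i - v i) ^ 2 = (u - v) ⬝ᵥ (u - v) := by
  simp only [dotProduct, sq, Pi.sub_apply]

theorem rsq_sub_rsq_eq_scorr_sq {y yx yw e : Fin n → ℝ} (hy : scov y y ≠ 0)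
    (he : ∑ i, e i = 0) (hee : e ⬝ᵥ e ≠ 0) (heyx : e ⬝ᵥ yx = 0)
    (hfit : yw - yx = (e ⬝ᵥ y / e ⬝ᵥ e) • e) :
    rsq y yw - rsq y yx = scorr e y ^ 2 := by
  have hN : (n : ℝ) - 1 ≠ 0 := fun h => hy (by simp [scov, h])
  have hsse :
      (yw - y) ⬝ᵥ (yw - y) = (yx - y) ⬝ᵥ (yx - y) - (e ⬝ᵥ y) ^ 2 / e ⬝ᵥ e := by
    have hdecomp : yw - y = (yx - y) + (e ⬝ᵥ y / e ⬝ᵥ e) • e := by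
      rw [← hfit]; abel
    have hcross : (yx - y) ⬝ᵥ e = -(e ⬝ᵥ y) := by
      rw [dotProduct_comm, dotProduct_sub, heyx, zero_sub]
    rw [hdecomp]
    simp only [add_dotProduct, dotProduct_add, smul_dotProduct, dotProduct_smul, smul_eq_mul,
      hcross, dotProduct_comm e (yx - y)]
    field_simp
    ring
  rw [rsq, rsq, sum_sub_sq_eq_dotProduct, sum_sub_sq_eq_dotProduct, hsse, scorr_sq,
    scov_eq_dotProduct_of_sum_eq_zero he, scov_eq_dotProduct_of_sum_eq_zero he]
  field_simp
  ring

end Gain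

section Standardized

variable {n k : ℕ}

noncomputable def corrMatrix (x : Fin n → Fin k → ℝ) : Matrix (Fin k) (Fin k) ℝ :=
  of fun i j => scorr (x · i) (x · j)

noncomputable def corrVec (v : Fin n → ℝ) (x : Fin n → Fin k → ℝ) : Fin k → ℝ :=
  fun j => scorr v (x · j)

variable {x : Fin n → Fin k → ℝ}

lemma corrVec_dotProduct_standardized (hx : ∀ l, scov (x · l) (x · l) ≠ 0) (a : ℝ)
    (c : Fin k → ℝ) (w : Fin n → ℝ) (s : ℝ) :
    corrVec w x ⬝ᵥ (fun l => c l * sstd (x · l) / s)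
      = scov (fun i => a + ∑ l, c l * x i l) w / (sstd w * s) := by
  rw [scov_affine_left, Finset.sum_div]
  refine Finset.sum_congr rfl fun l _ => ?_
  have hl := sstd_ne_zero (hx l)
  simp only [corrVec, scorr, scov_comm w]
  field_simp

theorem inv_corrMatrix_mulVec_corrVec {z zx : Fin n → ℝ} {a : ℝ} {c : Fin k → ℝ}
    (hx : ∀ l, scov (x · l) (x · l) ≠ 0) (hU : IsUnit (corrMatrix x).det)
    (hzx : ∀ i, zx i = a + ∑ l, c l * x i l) (he : zx - z ∈ residualSpace x) :
    (corrMatrix x)⁻¹ *ᵥ corrVec z x = fun l => c l * sstd (x · l) / sstd z := by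
  suffices h : corrMatrix x *ᵥ (fun l => c l * sstd (x · l) / sstd z) = corrVec z x by
    rw [← h, mulVec_mulVec, nonsing_inv_mul _ hU, one_mulVec]
  funext j
  have hej : scov (zx - z) (x · j) = 0 := by
    rw [scov_eq_dotProduct_of_sum_eq_zero he.1]
    exact div_eq_zero_iff.mpr (Or.inl (he.2 j))
  rw [scov_sub_left, sub_eq_zero, funext hzx] at hej
  change corrVec (x · j) x ⬝ᵥ _ = _
  rw [corrVec_dotProduct_standardized hx a, hej, corrVec, scorr, mul_comm (sstd _)]

theorem standardized_gain_eq_scorr_sq {y z zx : Fin n → ℝ}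
    (hx : ∀ l, scov (x · l) (x · l) ≠ 0) (hU : IsUnit (corrMatrix x).det)
    (hy : scov y y ≠ 0) (hz : scov z z ≠ 0)
    (hzx : zx ∈ affineFunctions x) (he : zx - z ∈ residualSpace x)
    (hee : scov (zx - z) (zx - z) ≠ 0) :
    (((corrMatrix x)⁻¹ *ᵥ corrVec z x) ⬝ᵥ corrVec y x - scorr y z) ^ 2
        / (1 - corrVec z x ⬝ᵥ ((corrMatrix x)⁻¹ *ᵥ corrVec z x))
      = scorr (zx - z) y ^ 2 := by
  obtain ⟨a, c, hzx⟩ := hzx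
  set e := zx - z
  have hy' := sstd_ne_zero hy
  have hz' := sstd_ne_zero hz
  have hβy : ((corrMatrix x)⁻¹ *ᵥ corrVec z x) ⬝ᵥ corrVec y x
      = scov zx y / (sstd y * sstd z) := by
    rw [inv_corrMatrix_mulVec_corrVec hx hU hzx he, dotProduct_comm,
      corrVec_dotProduct_standardized hx a, ← funext hzx]
  have hβz : corrVec z x ⬝ᵥ ((corrMatrix x)⁻¹ *ᵥ corrVec z x)
      = scov zx z / (sstd z * sstd z) := by
    rw [inv_corrMatrix_mulVec_corrVec hx hU hzx he, corrVec_dotProduct_standardized hx a,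
      ← funext hzx]
  have hezx : scov e zx = 0 := by
    rw [scov_eq_dotProduct_of_sum_eq_zero he.1,
      dotProduct_eq_zero_of_mem_residualSpace he ⟨a, c, hzx⟩, zero_div]
  have hzy : scov zx y = scov z y + scov e y := by rw [scov_sub_left]; ring
  have hzz : scov zx z = scov z z - scov e e := by
    have h1 := scov_sub_left zx z e
    have h2 := scov_sub_left zx z z
    rw [scov_comm zx e, hezx, scov_comm z e] at h1
    linarith
  rw [hβy, hβz, hzy, hzz, scorr_sq, scorr, scov_comm y z]
  field_simp
  rw [sstd_sq, sstd_sq, add_sub_cancel_left, sub_sub_cancel]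
  field_simp

end Standardized

theorem rsq_increase_by_new_variable_general
    (n k : ℕ)
    (y z : Fin n → ℝ) (x : Fin n → Fin k → ℝ)
    -- least-squares fit of y on x
    (yx : Fin n → ℝ)
    (hyx : (∃ (b0 : ℝ) (b : Fin k → ℝ), ∀ i, yx i = b0 + ∑ j, b j * x i j) ∧
           (∑ i, (y i - yx i)) = 0 ∧ ∀ j, (∑ i, (y i - yx i) * x i j) = 0)
    -- least-squares fit of y on w = (x, z)
    (yw : Fin n → ℝ)
    (hyw : (∃ (b0 : ℝ) (b : Fin k → ℝ) (bz : ℝ), ∀ i, yw i = b0 + (∑ j, b j * x i j) + bz * z i) ∧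
           (∑ i, (y i - yw i)) = 0 ∧ (∀ j, (∑ i, (y i - yw i) * x i j) = 0) ∧
           (∑ i, (y i - yw i) * z i) = 0)
    -- least-squares fit ẑ of z on x
    (zx : Fin n → ℝ)
    (hzx : (∃ (b0 : ℝ) (b : Fin k → ℝ), ∀ i, zx i = b0 + ∑ j, b j * x i j) ∧
           (∑ i, (z i - zx i)) = 0 ∧ ∀ j, (∑ i, (z i - zx i) * x i j) = 0)
    -- correlation matrix of predictors and correlation vectors
    (Rxx : Matrix (Fin k) (Fin k) ℝ)
    (hRxx : ∀ i j, Rxx i j = scorr (x · i) (x · j))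
    (hRxxU : IsUnit Rxx.det)
    (ryx rzx : Fin k → ℝ)
    (hryx : ∀ j, ryx j = scorr y (x · j))
    (hrzx : ∀ j, rzx j = scorr z (x · j))
    -- nondegeneracy
    (hsy : scov y y ≠ 0) (hsz : scov z z ≠ 0)
    (hsx : ∀ j, scov (x · j) (x · j) ≠ 0)
    (hse : scov (fun i => zx i - z i) (fun i => zx i - z i) ≠ 0) :
    rsq y yw - rsq y yx
      = ((Rxx⁻¹ *ᵥ rzx) ⬝ᵥ ryx - scorr y z) ^ 2 / (1 - rzx ⬝ᵥ (Rxx⁻¹ *ᵥ rzx)) ∧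
    rsq y yw - rsq y yx = (scorr (fun i => zx i - z i) y) ^ 2 := by
  obtain ⟨⟨ax, bx, hbx⟩, hr⟩ := hyx
  obtain ⟨⟨aw, bw, bz, hbw⟩, hs0, hsx', hsz'⟩ := hyw
  obtain ⟨⟨az, cb, hcb⟩, hz⟩ := hzx
  obtain rfl : Rxx = corrMatrix x := Matrix.ext hRxx
  obtain rfl : ryx = corrVec y x := funext hryx
  obtain rfl : rzx = corrVec z x := funext hrzx
  have he : zx - z ∈ residualSpace x := by rw [← neg_sub]; exact neg_mem hz
  have hee : (zx - z) ⬝ᵥ (zx - z) ≠ 0 := fun h =>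
    hse ((scov_eq_dotProduct_of_sum_eq_zero he.1 (zx - z)).trans (by rw [h, zero_div]))
  have hfit := fit_sub_fit_eq_smul_residual (bz := bz) ⟨ax, bx, hbx⟩ hr
    ⟨aw, bw, fun i => by simp [hbw]⟩ ⟨hs0, hsx'⟩ hsz' ⟨az, cb, hcb⟩ he hee
  have hgain : rsq y yw - rsq y yx = scorr (zx - z) y ^ 2 :=
    rsq_sub_rsq_eq_scorr_sq hsy he.1 hee
      (dotProduct_eq_zero_of_mem_residualSpace he ⟨ax, bx, hbx⟩) hfit
  exact ⟨hgain.trans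
    (standardized_gain_eq_scorr_sq hsx hRxxU hsy hsz ⟨az, cb, hcb⟩ he hse).symm, hgain⟩

/-- In linear regression, the increase in the coefficient of
determination when adding a new variable `z` to the predictors `x` equals
`R²_{yw} - R²_{yx} = (r̂_{yz} - r_{yz})² / (1 - R²_{zx})`, where
`r̂_{yz} = (β̂*_{zx})ᵀ r_{yx}` with `β̂*_{zx} = R_{xx}⁻¹ r_{zx}` the standardized
regression coefficients of `z` on `x`, and `R²_{zx} = r_{zx}ᵀ R_{xx}⁻¹ r_{zx}`;
moreover this increase equals the squared correlation `r²_{ey}` between `y` and the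
residual `e = ẑ - z` of predicting `z` from `x`.  The least-squares fits are
characterized by the normal equations. -/
theorem rsq_increase_by_new_variable
    (n k : ℕ) (hn : 2 ≤ n)
    (y z : Fin n → ℝ) (x : Fin n → Fin k → ℝ)
    -- least-squares fit of y on x
    (yx : Fin n → ℝ)
    (hyx : (∃ (b0 : ℝ) (b : Fin k → ℝ), ∀ i, yx i = b0 + ∑ j, b j * x i j) ∧
           (∑ i, (y i - yx i)) = 0 ∧ ∀ j, (∑ i, (y i - yx i) * x i j) = 0)
    -- least-squares fit of y on w = (x, z)
    (yw : Fin n → ℝ)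
    (hyw : (∃ (b0 : ℝ) (b : Fin k → ℝ) (bz : ℝ), ∀ i, yw i = b0 + (∑ j, b j * x i j) + bz * z i) ∧
           (∑ i, (y i - yw i)) = 0 ∧ (∀ j, (∑ i, (y i - yw i) * x i j) = 0) ∧
           (∑ i, (y i - yw i) * z i) = 0)
    -- least-squares fit ẑ of z on x
    (zx : Fin n → ℝ)
    (hzx : (∃ (b0 : ℝ) (b : Fin k → ℝ), ∀ i, zx i = b0 + ∑ j, b j * x i j) ∧
           (∑ i, (z i - zx i)) = 0 ∧ ∀ j, (∑ i, (z i - zx i) * x i j) = 0)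
    -- correlation matrix of predictors and correlation vectors
    (Rxx : Matrix (Fin k) (Fin k) ℝ)
    (hRxx : ∀ i j, Rxx i j = scorr (x · i) (x · j))
    (hRxxU : IsUnit Rxx.det)
    (ryx rzx : Fin k → ℝ)
    (hryx : ∀ j, ryx j = scorr y (x · j))
    (hrzx : ∀ j, rzx j = scorr z (x · j))
    -- nondegeneracy
    (hsy : scov y y ≠ 0) (hsz : scov z z ≠ 0)
    (hsx : ∀ j, scov (x · j) (x · j) ≠ 0)
    (hse : scov (fun i => zx i - z i) (fun i => zx i - z i) ≠ 0)
    (hR2zx : rzx ⬝ᵥ (Rxx⁻¹ *ᵥ rzx) ≠ 1) :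
    rsq y yw - rsq y yx
      = ((Rxx⁻¹ *ᵥ rzx) ⬝ᵥ ryx - scorr y z) ^ 2 / (1 - rzx ⬝ᵥ (Rxx⁻¹ *ᵥ rzx)) ∧
    rsq y yw - rsq y yx = (scorr (fun i => zx i - z i) y) ^ 2 :=
  rsq_increase_by_new_variable_general n k y z x yx hyx yw hyw zx hzx Rxx hRxx hRxxU ryx rzx hryx
    hrzx hsy hsz hsx hse
end

section
/- For a reward redistribution with terminal correction R_{T+2} = R~_{T+1} − Σ_{t=0}^T h_t appended after the episode, the optimality conditions extend to the correction: κ(T−t+1, t−1) = 0 for all t, and in particular E[R_{T+2} | s_T, a_T] = 0 when the contributions satisfy h_t = q~^π(s_t,a_t) − q~^π(s_{t−1},a_{t−1}). -/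
open Finset

/-!
On a trajectory of positive probability, the optimality condition makes the contributions
`h_τ = q̃(s_τ,a_τ) - q̃(s_{τ-1},a_{τ-1})` telescope, so the rewards redistributed up to time
`t - 1` add up to `q̃(s_{t-1},a_{t-1})`. The rewards still to come, including the correction, are
therefore `R̃_{T+1} - q̃(s_{t-1},a_{t-1})`, whose expectation given `(s_{t-1},a_{t-1})` vanishes
because `q̃` is exactly that conditional expectation of `R̃_{T+1}`.
-/

section CondExp

variable {Ω : Type*} [Fintype Ω] {μ : Ω → ℝ} {E : Ω → Prop} [DecidablePred E]

theorem sum_filter_ne_zero_of_ne_zero (hμ0 : ∀ ω, 0 ≤ μ ω) {ω : Ω} (hω : μ ω ≠ 0)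
    (hE : E ω) : ∑ ω' ∈ univ.filter E, μ ω' ≠ 0 :=
  (((hμ0 ω).lt_of_ne' hω).trans_le
    (single_le_sum (fun ω' _ => hμ0 ω') (mem_filter.mpr ⟨mem_univ ω, hE⟩))).ne'

theorem cexp_congr_of_ne_zero {f g : Ω → ℝ} (hfg : ∀ ω, E ω → μ ω ≠ 0 → f ω = g ω) :
    cexp μ f E = cexp μ g E := by
  unfold cexp
  congr 1
  refine sum_congr rfl fun ω hω => ?_
  by_cases hμω : μ ω = 0
  · simp [hμω]
  · rw [hfg ω (mem_filter.mp hω).2 hμω]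

theorem cexp_sub_const (f : Ω → ℝ) (c : ℝ) (hE : ∑ ω ∈ univ.filter E, μ ω ≠ 0) :
    cexp μ (fun ω => f ω - c) E = cexp μ f E - c := by
  simp only [cexp, mul_sub, sum_sub_distrib, ← sum_mul]
  field_simp

end CondExp

theorem sum_filter_val_lt_eq_of_eq_sub_pd {M : Type*} [AddCommGroup M] {T : ℕ}
    {g d : Fin (T + 1) → M} (hd : ∀ τ, d τ = g τ - if (τ : ℕ) = 0 then 0 else g (pd τ))
    (t : ℕ) (ht1 : 1 ≤ t) (ht2 : t ≤ T + 1) :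
    ∑ τ ∈ univ.filter (fun τ : Fin (T + 1) => (τ : ℕ) < t), d τ =
      g ⟨t - 1, Nat.sub_one_lt_of_le ht1 ht2⟩ := by
  induction t, ht1 using Nat.le_induction with
  | base =>
    have h0 : univ.filter (fun τ : Fin (T + 1) => (τ : ℕ) < 1) = {0} := by
      ext τ
      simp only [mem_filter, mem_univ, true_and, mem_singleton, Fin.ext_iff, Fin.val_zero]
      omega
    rw [h0, sum_singleton, hd, if_pos (Fin.val_zero (T + 1)), sub_zero]
    rfl
  | succ n hn ih =>
    have hnew : (⟨n, by omega⟩ : Fin (T + 1)) ∉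
        univ.filter (fun τ : Fin (T + 1) => (τ : ℕ) < n) := by
      simp
    have hsplit : univ.filter (fun τ : Fin (T + 1) => (τ : ℕ) < n + 1) =
        insert ⟨n, by omega⟩ (univ.filter fun τ : Fin (T + 1) => (τ : ℕ) < n) := by
      ext τ
      simp only [mem_filter, mem_univ, true_and, mem_insert, Fin.ext_iff]
      omega
    rw [hsplit, sum_insert hnew, ih (by omega), hd, if_neg (show n ≠ 0 by omega)]
    exact sub_add_cancel _ _

section Trajectory

variable {X : Type*} [Fintype X] [DecidableEq X] {T : ℕ} {μ : (Fin (T + 1) → X) → ℝ}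
  {rT : X → ℝ} {h : Fin (T + 1) → X → X → ℝ} {q : Fin (T + 1) → X → ℝ}

theorem sum_contributions_eq_q_of_ne_zero (hμ0 : ∀ ω, 0 ≤ μ ω)
    (hopt : ∀ (t : Fin (T + 1)) (y x : X),
      (∑ ω ∈ univ.filter (fun ω => ω (pd t) = y ∧ ω t = x), μ ω) ≠ 0 →
      h t y x = q t x - (if (t : ℕ) = 0 then 0 else q (pd t) y))
    (t : ℕ) (ht1 : 1 ≤ t) (ht2 : t ≤ T + 1) {ω : Fin (T + 1) → X} (hω : μ ω ≠ 0) :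
    ∑ τ ∈ univ.filter (fun τ : Fin (T + 1) => (τ : ℕ) < t), h τ (ω (pd τ)) (ω τ) =
      q ⟨t - 1, Nat.sub_one_lt_of_le ht1 ht2⟩ (ω ⟨t - 1, Nat.sub_one_lt_of_le ht1 ht2⟩) :=
  sum_filter_val_lt_eq_of_eq_sub_pd (g := fun τ => q τ (ω τ))
    (fun τ => hopt τ _ _ (sum_filter_ne_zero_of_ne_zero hμ0 hω ⟨rfl, rfl⟩)) t ht1 ht2

theorem cexp_sub_sum_contributions_eq_zero (hμ0 : ∀ ω, 0 ≤ μ ω)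
    (hq : ∀ t x, q t x = cexp μ (fun ω => rT (ω (Fin.last T))) (fun ω => ω t = x))
    (hopt : ∀ (t : Fin (T + 1)) (y x : X),
      (∑ ω ∈ univ.filter (fun ω => ω (pd t) = y ∧ ω t = x), μ ω) ≠ 0 →
      h t y x = q t x - (if (t : ℕ) = 0 then 0 else q (pd t) y))
    (t : ℕ) (ht1 : 1 ≤ t) (ht2 : t ≤ T + 1) (x : X)
    (hx : (∑ ω ∈ univ.filter (fun ω => ω ⟨t - 1, Nat.sub_one_lt_of_le ht1 ht2⟩ = x), μ ω) ≠ 0) :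
    cexp μ
      (fun ω => rT (ω (Fin.last T)) -
        ∑ τ ∈ univ.filter (fun τ : Fin (T + 1) => (τ : ℕ) < t), h τ (ω (pd τ)) (ω τ))
      (fun ω => ω ⟨t - 1, Nat.sub_one_lt_of_le ht1 ht2⟩ = x) = 0 := by
  set s : Fin (T + 1) := ⟨t - 1, Nat.sub_one_lt_of_le ht1 ht2⟩
  rw [cexp_congr_of_ne_zero (g := fun ω => rT (ω (Fin.last T)) - q s x)
      fun ω hωx hω => by rw [sum_contributions_eq_q_of_ne_zero hμ0 hopt t ht1 ht2 hω, hωx],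
    cexp_sub_const _ _ hx, hq, sub_self]

end Trajectory

/-- For a reward redistribution with the terminal correction
`R_{T+2} = R̃_{T+1} - ∑_{t=0}^T h_t` appended after the episode, the optimality
conditions extend to the correction: `κ(T-t+1, t-1) = 0` for all `t`, and in
particular `E[R_{T+2} | s_T, a_T] = 0`, when the contributions satisfy
`h_t = q̃^π(s_t,a_t) - q̃^π(s_{t-1},a_{t-1})` (with `q̃^π(s₋₁,a₋₁) = 0`).
The conditional expectation of the correction given a trajectory is
`rT(s_T,a_T) - ∑_t h_t`, where `rT(s_T,a_T) = E[R̃_{T+1} | s_T,a_T]`. -/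
theorem optimality_conditions_with_correction
    {S A : Type*} [Fintype S] [Fintype A] [DecidableEq S] [DecidableEq A]
    (T : ℕ)
    -- Markov trajectory distribution of state-action pairs under the fixed policy π
    (μ : (Fin (T + 1) → S × A) → ℝ)
    (hμ0 : ∀ ω, 0 ≤ μ ω)
    -- expected delayed reward at sequence end, given the last state-action pair
    (rT : S × A → ℝ)
    -- `h t y x = E[R_{t+1} | (s_{t-1},a_{t-1}) = y, (s_t,a_t) = x]`, the contributions
    (h : Fin (T + 1) → S × A → S × A → ℝ)
    -- q̃^π : action-value function of the delayed-reward MDP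
    (q : Fin (T + 1) → S × A → ℝ)
    (hq : ∀ t x, q t x = cexp μ (fun ω => rT (ω (Fin.last T))) (fun ω => ω t = x))
    -- the contributions are the differences of consecutive q̃^π-values
    (hopt : ∀ (t : Fin (T + 1)) (y x : S × A),
      (∑ ω ∈ Finset.univ.filter (fun ω => ω (pd t) = y ∧ ω t = x), μ ω) ≠ 0 →
      h t y x = q t x - (if (t : ℕ) = 0 then 0 else q (pd t) y)) :
    -- κ(T-t+1, t-1) = 0 for all 1 ≤ t ≤ T+1 (rewards R_{t+1},…,R_{T+2})
    (∀ t : ℕ, ∀ (ht1 : 1 ≤ t) (ht2 : t ≤ T + 1), ∀ x : S × A,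
      (∑ ω ∈ Finset.univ.filter (fun ω => ω ⟨t - 1, by omega⟩ = x), μ ω) ≠ 0 →
      cexp μ
        (fun ω =>
          (∑ τ ∈ Finset.univ.filter (fun τ : Fin (T + 1) => t ≤ (τ : ℕ)),
            h τ (ω (pd τ)) (ω τ)) +
          (rT (ω (Fin.last T)) - ∑ τ : Fin (T + 1), h τ (ω (pd τ)) (ω τ)))
        (fun ω => ω ⟨t - 1, by omega⟩ = x) = 0) ∧
    -- in particular:  E[R_{T+2} | s_T, a_T] = 0
    (∀ x : S × A,
      (∑ ω ∈ Finset.univ.filter (fun ω => ω (Fin.last T) = x), μ ω) ≠ 0 →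
      cexp μ
        (fun ω => rT (ω (Fin.last T)) - ∑ τ : Fin (T + 1), h τ (ω (pd τ)) (ω τ))
        (fun ω => ω (Fin.last T) = x) = 0) := by
  refine ⟨fun t ht1 ht2 x hx => ?_, fun x hx => ?_⟩
  · convert cexp_sub_sum_contributions_eq_zero hμ0 hq hopt t ht1 ht2 x hx using 2
    funext ω
    rw [← sum_filter_add_sum_filter_not univ (fun τ : Fin (T + 1) => t ≤ (τ : ℕ))]
    simp only [not_le]
    abel
  · have hall : univ.filter (fun τ : Fin (T + 1) => (τ : ℕ) < T + 1) = univ :=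
      filter_true_of_mem fun τ _ => τ.isLt
    have hcorrection :=
      cexp_sub_sum_contributions_eq_zero hμ0 hq hopt (T + 1) le_add_self le_rfl x hx
    rw [hall] at hcorrection
    exact hcorrection
end
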